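/- arXiv:math/9902017 — 6 statements merged into one kernel-verified Lean document; each statement's English description precedes it below -/
import Mathlib

section
/- The only solution (x0,x1,x2,x3,x4) ∈ ℂ^5 of the system of five quadratic equations x_i^2 + 2·x_{i+1}·x_{i+2} = 0 for all i ∈ ℤ/5 (indices mod 5) is x0 = x1 = x2 = x3 = x4 = 0. (Since these quadrics are, up to relabeling, the partial derivatives of Klein's cubic form F = x0^2x1 + x1^2x2 + x2^2x3 + x3^2x4 + x4^2x0, this says exactly that the Klein cubic hypersurface V(F) ⊂ P^4(ℂ) is smooth.) -/
/-- Helper: if the five cyclic equations hold and the first variable vanishes,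
then all five vanish. -/
lemma klein_aux (a b c d e : ℂ)
    (h0 : a ^ 2 + 2 * b * c = 0) (h1 : b ^ 2 + 2 * c * d = 0)
    (h2 : c ^ 2 + 2 * d * e = 0) (h3 : d ^ 2 + 2 * e * a = 0)
    (h4 : e ^ 2 + 2 * a * b = 0) (ha : a = 0) :
    a = 0 ∧ b = 0 ∧ c = 0 ∧ d = 0 ∧ e = 0 := by
  subst ha
  have hbc : b * c = 0 := by linear_combination h0 / 2
  rcases mul_eq_zero.mp hbc with hb | hc
  · subst hb
    have he : e = 0 := by
      have : e ^ 2 = 0 := by linear_combination h4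
      exact pow_eq_zero_iff (n := 2) (by norm_num) |>.mp this
    subst he
    have hd : d = 0 := by
      have : d ^ 2 = 0 := by linear_combination h3
      exact pow_eq_zero_iff (n := 2) (by norm_num) |>.mp this
    subst hd
    have hc : c = 0 := by
      have : c ^ 2 = 0 := by linear_combination h2
      exact pow_eq_zero_iff (n := 2) (by norm_num) |>.mp this
    exact ⟨rfl, rfl, hc, rfl, rfl⟩
  · subst hc
    have hb : b = 0 := by
      have : b ^ 2 = 0 := by linear_combination h1
      exact pow_eq_zero_iff (n := 2) (by norm_num) |>.mp this
    subst hb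
    have he : e = 0 := by
      have : e ^ 2 = 0 := by linear_combination h4
      exact pow_eq_zero_iff (n := 2) (by norm_num) |>.mp this
    subst he
    have hd : d = 0 := by
      have : d ^ 2 = 0 := by linear_combination h3
      exact pow_eq_zero_iff (n := 2) (by norm_num) |>.mp this
    exact ⟨rfl, rfl, rfl, hd, rfl⟩

/-- The only solution of the system `x_i^2 + 2 x_{i+1} x_{i+2} = 0` (indices mod 5)
in `ℂ^5` is `x = 0`; i.e. the Klein cubic is smooth. -/
theorem klein_cubic_smooth (x : Fin 5 → ℂ)
    (h : ∀ i : Fin 5, x i ^ 2 + 2 * x (i + 1) * x (i + 2) = 0) :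
    x = 0 := by
  set a := x 0 with hA
  set b := x 1 with hB
  set c := x 2 with hC
  set d := x 3 with hD
  set e := x 4 with hE
  have h0 : a ^ 2 + 2 * b * c = 0 := by have := h 0; simpa using this
  have h1 : b ^ 2 + 2 * c * d = 0 := by have := h 1; simpa using this
  have h2 : c ^ 2 + 2 * d * e = 0 := by have := h 2; simpa using this
  have h3 : d ^ 2 + 2 * e * a = 0 := by have := h 3; simpa using this
  have h4 : e ^ 2 + 2 * a * b = 0 := by have := h 4; simpa using this
  have h33 : (33 : ℂ) * (a * b * c * d * e) ^ 2 = 0 := by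
    linear_combination (b^2*c^2*d^2*e^2) * h0 + (-2*b*c^3*d^2*e^2) * h1 +
      (4*b*c^2*d^3*e^2) * h2 + (-8*b*c^2*d^2*e^3) * h3 + (16*a*b*c^2*d^2*e^2) * h4
  have hp : a * b * c * d * e = 0 := by
    have hsq : (a * b * c * d * e) ^ 2 = 0 :=
      (mul_eq_zero.mp h33).resolve_left (by norm_num)
    exact pow_eq_zero_iff (n := 2) (by norm_num) |>.mp hsq
  have hall : a = 0 ∧ b = 0 ∧ c = 0 ∧ d = 0 ∧ e = 0 := by
    rcases mul_eq_zero.mp hp with hp' | he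
    rcases mul_eq_zero.mp hp' with hp'' | hd
    rcases mul_eq_zero.mp hp'' with hp''' | hc
    rcases mul_eq_zero.mp hp''' with ha | hb
    · exact klein_aux a b c d e h0 h1 h2 h3 h4 ha
    · obtain ⟨hb', hc', hd', he', ha'⟩ := klein_aux b c d e a h1 h2 h3 h4 h0 hb
      exact ⟨ha', hb', hc', hd', he'⟩
    · obtain ⟨hc', hd', he', ha', hb'⟩ := klein_aux c d e a b h2 h3 h4 h0 h1 hc
      exact ⟨ha', hb', hc', hd', he'⟩
    · obtain ⟨hd', he', ha', hb', hc'⟩ := klein_aux d e a b c h3 h4 h0 h1 h2 hd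
      exact ⟨ha', hb', hc', hd', he'⟩
    · obtain ⟨he', ha', hb', hc', hd'⟩ := klein_aux e a b c d h4 h0 h1 h2 h3 he
      exact ⟨ha', hb', hc', hd', he'⟩
  obtain ⟨ha, hb, hc, hd, he⟩ := hall
  funext i
  fin_cases i <;> simpa [hA, hB, hC, hD, hE] using (by assumption : _)
end

section
/- The sextic polynomial f6 is irreducible in ℂ[x1,x2,x3,x4,x5]. (This is the equation of the hypersurface D2 ⊂ P^4 = P(V_-^∨) which contains the locus of odd 2-torsion points of (1,11)-polarized abelian surfaces with canonical level structure.) -/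
/-!
Regard `f6` as a quartic in `x1` over `ℂ[x2, …, x5]`. Its coefficients of `x1⁴` and `x1³`,
`-x2 x5` and `x3 x4²`, are coprime, so it is primitive; a factorization into two factors of
positive `x1`-degree would therefore persist under any specialization of `x2, …, x5` that keeps
the leading coefficient nonzero.
On the line `(x2, x3, x4, x5) = (1, t, t, 1)` the quartic becomes
`-x1⁴ + t³ x1³ - (t³ + t² + t) x1² + (t⁴ + t³ - t² + 2t) x1 + (t³ - t² + t)`,
which is Eisenstein at `t`.
-/

open MvPolynomial

/-- The sextic `f6` in variables `x1,…,x5` (here `X 0 = x1, …, X 4 = x5`),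
the Pfaffian of the intertwining matrix `S`; its vanishing locus `D2 ⊂ P⁴`
contains the locus of odd 2-torsion points of `(1,11)`-polarized abelian surfaces. -/
noncomputable def sexticF6 : MvPolynomial (Fin 5) ℂ :=
  -(X 0 ^ 2 * X 1 * X 2 ^ 3) + X 0 ^ 3 * X 2 * X 3 ^ 2 - X 1 ^ 3 * X 2 ^ 2 * X 4
    + X 0 * X 3 ^ 3 * X 4 ^ 2 + X 1 ^ 2 * X 3 * X 4 ^ 3
    + X 0 * X 1 ^ 4 * X 3 - X 1 * X 2 * X 3 ^ 4 - X 0 ^ 4 * X 1 * X 4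
    + X 2 ^ 4 * X 3 * X 4 + X 0 * X 2 * X 4 ^ 4
    + X 0 * X 1 * X 2 ^ 2 * X 3 ^ 2 - X 0 ^ 2 * X 1 ^ 2 * X 2 * X 4
    - X 0 * X 1 ^ 2 * X 3 ^ 2 * X 4 - X 0 ^ 2 * X 2 * X 3 * X 4 ^ 2
    + X 1 * X 2 ^ 2 * X 3 * X 4 ^ 2

namespace Polynomial

theorem isPrimitive_of_isRelPrime_coeff {R : Type*} [CommSemiring R] {f : R[X]} {i j : ℕ}
    (h : IsRelPrime (f.coeff i) (f.coeff j)) : f.IsPrimitive :=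
  isPrimitive_iff_isUnit_of_C_dvd.2 fun r hr =>
    h ((C_dvd_iff_dvd_coeff r f).1 hr i) ((C_dvd_iff_dvd_coeff r f).1 hr j)

variable {R S : Type*} [CommRing R] [IsDomain R] [CommRing S] [IsDomain S]

theorem IsPrimitive.irreducible_of_irreducible_map_of_leadingCoeff_ne_zero (φ : R →+* S)
    {f : R[X]} (hf : f.IsPrimitive) (hlead : φ f.leadingCoeff ≠ 0)
    (h_irr : Irreducible (f.map φ)) : Irreducible f := by
  have isUnit_of_mul_eq {a b : R[X]} (hab : a * b = f) (ha : IsUnit (a.map φ)) : IsUnit a := by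
    have hmap : a.map φ * b.map φ = f.map φ := by rw [← hab, Polynomial.map_mul]
    have hdeg : a.natDegree + b.natDegree = (a.map φ).natDegree + (b.map φ).natDegree := by
      rw [← natDegree_mul (left_ne_zero_of_mul (hab ▸ hf.ne_zero))
          (right_ne_zero_of_mul (hab ▸ hf.ne_zero)), hab,
        ← natDegree_map_of_leadingCoeff_ne_zero φ hlead, ← hmap,
        natDegree_mul (left_ne_zero_of_mul (hmap ▸ h_irr.ne_zero))
          (right_ne_zero_of_mul (hmap ▸ h_irr.ne_zero))]
    have : a.natDegree = 0 := by
      have := natDegree_eq_zero_of_isUnit ha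
      have := natDegree_map_le (f := φ) (p := b)
      omega
    obtain ⟨c, rfl⟩ := natDegree_eq_zero.1 this
    exact isUnit_C.2 (isPrimitive_of_dvd hf ⟨b, hab.symm⟩ c dvd_rfl)
  refine ⟨fun h => h_irr.not_isUnit (h.map (mapRingHom φ)), fun a b hab => ?_⟩
  exact (h_irr.isUnit_or_isUnit (by rw [hab, Polynomial.map_mul])).imp
    (isUnit_of_mul_eq hab.symm) (isUnit_of_mul_eq (by rw [hab, mul_comm]))

end Polynomial

namespace MvPolynomial

theorem isRelPrime_X_X {R σ : Type*} [CommRing R] [IsDomain R] {i j : σ} (h : i ≠ j) :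
    IsRelPrime (X i : MvPolynomial σ R) (X j) :=
  X_prime.irreducible.isRelPrime_iff_not_dvd.2 (X_dvd_X.not.2 h)

end MvPolynomial

-- On the right, `X i : MvPolynomial (Fin 4) ℂ` stands for `x_{i+2}`.
theorem finSuccEquiv_sexticF6 :
    finSuccEquiv ℂ 4 sexticF6 =
      Polynomial.C (-(X 0 * X 3)) * Polynomial.X ^ 4
      + Polynomial.C (X 1 * X 2 ^ 2) * Polynomial.X ^ 3
      - Polynomial.C (X 0 * X 1 ^ 3 + X 0 ^ 2 * X 1 * X 3 + X 1 * X 2 * X 3 ^ 2) * Polynomial.X ^ 2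
      + Polynomial.C (X 2 ^ 3 * X 3 ^ 2 + X 0 ^ 4 * X 2 + X 1 * X 3 ^ 4 + X 0 * X 1 ^ 2 * X 2 ^ 2
          - X 0 ^ 2 * X 2 ^ 2 * X 3) * Polynomial.X
      + Polynomial.C (-(X 0 ^ 3 * X 1 ^ 2 * X 3) + X 0 ^ 2 * X 2 * X 3 ^ 3 - X 0 * X 1 * X 2 ^ 4
          + X 1 ^ 4 * X 2 * X 3 + X 0 * X 1 ^ 2 * X 2 * X 3 ^ 2) := by
  simp only [sexticF6, map_add, map_sub, map_neg, map_mul, map_pow, finSuccEquiv_X_zero,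
    show (X 1 : MvPolynomial (Fin 5) ℂ) = X (Fin.succ 0) from rfl,
    show (X 2 : MvPolynomial (Fin 5) ℂ) = X (Fin.succ 1) from rfl,
    show (X 3 : MvPolynomial (Fin 5) ℂ) = X (Fin.succ 2) from rfl,
    show (X 4 : MvPolynomial (Fin 5) ℂ) = X (Fin.succ 3) from rfl, finSuccEquiv_X_succ]
  ring

theorem natDegree_finSuccEquiv_sexticF6 : (finSuccEquiv ℂ 4 sexticF6).natDegree = 4 := by
  rw [finSuccEquiv_sexticF6]
  compute_degree!

theorem leadingCoeff_finSuccEquiv_sexticF6 :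
    (finSuccEquiv ℂ 4 sexticF6).leadingCoeff = -(X 0 * X 3) := by
  rw [Polynomial.leadingCoeff, natDegree_finSuccEquiv_sexticF6, finSuccEquiv_sexticF6]
  simp only [Polynomial.coeff_add, Polynomial.coeff_sub, Polynomial.coeff_C_mul_X_pow,
    Polynomial.coeff_C_mul_X, Polynomial.coeff_C]
  norm_num

theorem coeff_three_finSuccEquiv_sexticF6 :
    (finSuccEquiv ℂ 4 sexticF6).coeff 3 = X 1 * X 2 ^ 2 := by
  rw [finSuccEquiv_sexticF6]
  simp only [Polynomial.coeff_add, Polynomial.coeff_sub, Polynomial.coeff_C_mul_X_pow,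
    Polynomial.coeff_C_mul_X, Polynomial.coeff_C]
  norm_num

theorem isPrimitive_finSuccEquiv_sexticF6 : (finSuccEquiv ℂ 4 sexticF6).IsPrimitive := by
  refine Polynomial.isPrimitive_of_isRelPrime_coeff
    (i := (finSuccEquiv ℂ 4 sexticF6).natDegree) (j := 3) ?_
  rw [← Polynomial.leadingCoeff, leadingCoeff_finSuccEquiv_sexticF6,
    coeff_three_finSuccEquiv_sexticF6]
  have hcoprime : IsRelPrime (X 0 * X 3 : MvPolynomial (Fin 4) ℂ) (X 1 * X 2 ^ 2) := by
    refine .mul_left (.mul_right ?_ (.pow_right ?_)) (.mul_right ?_ (.pow_right ?_)) <;>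
      exact isRelPrime_X_X (by decide)
  exact fun d hd₄ hd₃ => hcoprime (dvd_neg.1 hd₄) hd₃

noncomputable def evalOnLine : MvPolynomial (Fin 4) ℂ →+* Polynomial ℂ :=
  (aeval ![1, Polynomial.X, Polynomial.X, 1]).toRingHom

noncomputable def sexticF6OnLine : Polynomial (Polynomial ℂ) :=
  (finSuccEquiv ℂ 4 sexticF6).map evalOnLine

theorem sexticF6OnLine_eq : sexticF6OnLine =
    Polynomial.C (Polynomial.X ^ 3 - Polynomial.X ^ 2 + Polynomial.X)
      + Polynomial.C (Polynomial.X ^ 4 + Polynomial.X ^ 3 - Polynomial.X ^ 2 + 2 * Polynomial.X)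
        * Polynomial.X
      - Polynomial.C (Polynomial.X ^ 3 + Polynomial.X ^ 2 + Polynomial.X) * Polynomial.X ^ 2
      + Polynomial.C (Polynomial.X ^ 3) * Polynomial.X ^ 3 - Polynomial.X ^ 4 := by
  simp only [sexticF6OnLine, evalOnLine, finSuccEquiv_sexticF6, Polynomial.map_add,
    Polynomial.map_sub, Polynomial.map_mul, Polynomial.map_pow, Polynomial.map_C,
    Polynomial.map_X]
  simp only [AlgHom.toRingHom_eq_coe, RingHom.coe_coe, map_neg, map_mul, map_add, map_sub,
    map_pow, map_one, aeval_X, Matrix.cons_val_zero, Matrix.cons_val_one, Matrix.cons_val,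
    Polynomial.C_ofNat]
  ring

theorem natDegree_sexticF6OnLine : sexticF6OnLine.natDegree = 4 := by
  rw [sexticF6OnLine_eq]
  compute_degree!

theorem leadingCoeff_sexticF6OnLine : sexticF6OnLine.leadingCoeff = -1 := by
  rw [Polynomial.leadingCoeff, natDegree_sexticF6OnLine, sexticF6OnLine_eq]
  simp only [Polynomial.coeff_add, Polynomial.coeff_sub, Polynomial.coeff_C_mul_X_pow,
    Polynomial.coeff_C_mul_X, Polynomial.coeff_C, Polynomial.coeff_X_pow]
  norm_num

theorem isEisensteinAt_sexticF6OnLine :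
    sexticF6OnLine.IsEisensteinAt (Ideal.span {Polynomial.X}) := by
  refine ⟨?_, fun {n} hn => ?_, ?_⟩
  · simp [leadingCoeff_sexticF6OnLine, Ideal.mem_span_singleton, Polynomial.X_dvd_iff]
  · rw [natDegree_sexticF6OnLine] at hn
    rw [Ideal.mem_span_singleton, Polynomial.X_dvd_iff, sexticF6OnLine_eq]
    simp only [Polynomial.coeff_add, Polynomial.coeff_sub, Polynomial.coeff_C_mul_X_pow,
      Polynomial.coeff_C_mul_X, Polynomial.coeff_C, Polynomial.coeff_X_pow]
    interval_cases n <;> simp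
  · rw [Ideal.span_singleton_pow, Ideal.mem_span_singleton, Polynomial.X_pow_dvd_iff,
      sexticF6OnLine_eq]
    simp only [Polynomial.coeff_add, Polynomial.coeff_sub, Polynomial.coeff_C_mul_X_pow,
      Polynomial.coeff_C_mul_X, Polynomial.coeff_C, Polynomial.coeff_X_pow]
    exact fun h => by simpa using h 1 one_lt_two

theorem irreducible_sexticF6OnLine : Irreducible sexticF6OnLine :=
  isEisensteinAt_sexticF6OnLine.irreducible
    ((Ideal.span_singleton_prime Polynomial.X_ne_zero).2 Polynomial.prime_X)
    (Polynomial.isPrimitive_of_isRelPrime_coeff (i := sexticF6OnLine.natDegree) (j := 0) <| by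
      rw [← Polynomial.leadingCoeff, leadingCoeff_sexticF6OnLine]
      exact isUnit_one.neg.isRelPrime_left)
    (by rw [natDegree_sexticF6OnLine]; norm_num)

/-- The sextic `f6` is irreducible in `ℂ[x1,…,x5]`. -/
theorem sexticF6_irreducible : Irreducible sexticF6 := by
  refine (MulEquiv.irreducible_iff (finSuccEquiv ℂ 4)).1 ?_
  refine isPrimitive_finSuccEquiv_sexticF6.irreducible_of_irreducible_map_of_leadingCoeff_ne_zero
    evalOnLine ?_ irreducible_sexticF6OnLine
  simp [evalOnLine, leadingCoeff_finSuccEquiv_sexticF6]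
end

section
/- Let K be a field, let A be an n×n alternating matrix over K (i.e. Aᵀ = −A and all diagonal entries are 0), and let k be a natural number. Then rank(A) ≤ 2k if and only if there exist vectors u_1, w_1, ..., u_k, w_k ∈ K^n such that A = Σ_{s=1}^{k} (u_s·w_sᵀ − w_s·u_sᵀ). (Equivalently: a skew-symmetric form has rank ≤ 2k iff, viewed as a point of P(∧²K^n), it lies in the k-chordal locus of the Grassmannian Gr(2,n) of decomposable 2-vectors.) -/
/-!
If `A` is alternating and `A i j ≠ 0`, then with `u` the `i`-th column of `A` and `w` the `j`-th
column divided by `A i j`, the alternating matrix `B = A - (u wᵀ - w uᵀ)` has vanishing rows `i`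
and `j`. The column space of `B` lies in that of `A` and in the kernel of `x ↦ (x i, x j)`, which
maps the column space of `A` onto `K²`; hence `rank B ≤ rank A - 2`, and induction on `k` peels
off one term `u wᵀ - w uᵀ` at a time. Conversely, a sum of `k` such terms factors through
`K^(2k)`.
-/

open Matrix Module

theorem Submodule.finrank_add_finrank_le_of_map_eq_top {K E F : Type*} [DivisionRing K]
    [AddCommGroup E] [Module K E] [FiniteDimensional K E] [AddCommGroup F] [Module K F]
    {U V : Submodule K E} (f : E →ₗ[K] F) (hUV : U ≤ V) (hUf : U ≤ LinearMap.ker f)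
    (hVf : V.map f = ⊤) : finrank K U + finrank K F ≤ finrank K V := by
  have h := (f.domRestrict V).finrank_range_add_finrank_ker
  rw [LinearMap.range_domRestrict, hVf, finrank_top, LinearMap.ker_domRestrict] at h
  have hU : finrank K U ≤ finrank K (comap V.subtype (LinearMap.ker f)) :=
    (Submodule.comapSubtypeEquivOfLe hUV).finrank_eq.symm.le.trans
      (Submodule.finrank_mono (Submodule.comap_mono hUf))
  omega

namespace Matrix

theorem sum_vecMulVec_eq_mul {R l m ι : Type*} [CommSemiring R] [Fintype ι]
    (u : ι → l → R) (v : ι → m → R) :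
    ∑ s, vecMulVec (u s) (v s) = (of fun i s => u s i) * of fun s j => v s j := by
  ext i j
  simp [mul_apply, vecMulVec_apply, Matrix.sum_apply]

theorem rank_sum_vecMulVec_le {R l m ι : Type*} [CommSemiring R] [StrongRankCondition R]
    [Fintype ι] [Fintype m] (u : ι → l → R) (v : ι → m → R) :
    (∑ s, vecMulVec (u s) (v s)).rank ≤ Fintype.card ι := by
  rw [sum_vecMulVec_eq_mul]
  exact (rank_mul_le_left _ _).trans (rank_le_card_width _)

theorem rank_sum_vecMulVec_sub_vecMulVec_le {R m ι : Type*} [CommRing R] [StrongRankCondition R]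
    [Fintype ι] [Fintype m] (u w : ι → m → R) :
    (∑ s, (vecMulVec (u s) (w s) - vecMulVec (w s) (u s))).rank ≤ 2 * Fintype.card ι := by
  have h := rank_sum_vecMulVec_le (Sum.elim u w) (Sum.elim w (-u))
  rw [Fintype.sum_sum_type, Fintype.card_sum] at h
  simpa only [Sum.elim_inl, Sum.elim_inr, Pi.neg_apply, vecMulVec_neg, ← sub_eq_add_neg,
    Finset.sum_neg_distrib, Finset.sum_sub_distrib, two_mul] using h

def IsAlternating {R m : Type*} [Neg R] [Zero R] (A : Matrix m m R) : Prop :=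
  Aᵀ = -A ∧ ∀ i, A i i = 0

section Alternating

variable {R m : Type*}

theorem IsAlternating.apply_swap [Neg R] [Zero R] {A : Matrix m m R} (hA : A.IsAlternating)
    (i j : m) : A j i = -A i j :=
  congrFun (congrFun hA.1 i) j

theorem IsAlternating.sub [AddCommGroup R] {A B : Matrix m m R} (hA : A.IsAlternating)
    (hB : B.IsAlternating) : (A - B).IsAlternating :=
  ⟨by rw [transpose_sub, hA.1, hB.1, neg_sub_neg, neg_sub], fun i => by
    rw [sub_apply, hA.2, hB.2, sub_zero]⟩

theorem isAlternating_vecMulVec_sub_vecMulVec [CommRing R] (u w : m → R) :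
    (vecMulVec u w - vecMulVec w u).IsAlternating :=
  ⟨by ext i j; simp [vecMulVec_apply, mul_comm], fun i => by
    simp [vecMulVec_apply, mul_comm]⟩

variable {K : Type*} [Field K] [Fintype m] [DecidableEq m]

theorem IsAlternating.exists_rank_sub_add_two_le {A : Matrix m m K} (hA : A.IsAlternating)
    (hA0 : A ≠ 0) : ∃ u w : m → K, (A - (vecMulVec u w - vecMulVec w u)).rank + 2 ≤ A.rank := by
  obtain ⟨i, j, hij⟩ : ∃ i j, A i j ≠ 0 := by
    by_contra! h
    exact hA0 (Matrix.ext h)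
  set u := A *ᵥ Pi.single i 1
  set w := A *ᵥ Pi.single j (A i j)⁻¹
  have hu_apply : ∀ p, u p = A p i := fun p => by simp [u, mulVec_single]
  have hw_apply : ∀ p, w p = A p j * (A i j)⁻¹ := fun p => by simp [w, mulVec_single]
  set B := A - (vecMulVec u w - vecMulVec w u)
  have hBi : B i = 0 := by
    ext q
    simp [B, vecMulVec_apply, hu_apply, hw_apply, hA.2, hA.apply_swap q i, hij]
  have hBj : B j = 0 := by
    ext q
    simp [B, vecMulVec_apply, hu_apply, hw_apply, hA.2, hA.apply_swap q j,
      hA.apply_swap i j]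
    field_simp
    ring
  let f : (m → K) →ₗ[K] K × K := (LinearMap.proj i).prod (LinearMap.proj j)
  have hu_mem : u ∈ LinearMap.range A.mulVecLin := ⟨_, rfl⟩
  have hw_mem : w ∈ LinearMap.range A.mulVecLin := ⟨_, rfl⟩
  have hBA : LinearMap.range B.mulVecLin ≤ LinearMap.range A.mulVecLin := by
    rintro _ ⟨x, rfl⟩
    simp only [mulVecLin_apply, B, sub_mulVec, vecMulVec_mulVec, op_smul_eq_smul]
    exact sub_mem ⟨x, rfl⟩
      (sub_mem (Submodule.smul_mem _ _ hu_mem) (Submodule.smul_mem _ _ hw_mem))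
  have hBf : LinearMap.range B.mulVecLin ≤ LinearMap.ker f := by
    rintro _ ⟨x, rfl⟩
    simp [f, mulVec, hBi, hBj]
  have hAf : (LinearMap.range A.mulVecLin).map f = ⊤ := by
    refine Submodule.eq_top_iff'.mpr fun ⟨y₁, y₂⟩ => ⟨y₁ • w - (y₂ * (A i j)⁻¹) • u,
      sub_mem (Submodule.smul_mem _ _ hw_mem) (Submodule.smul_mem _ _ hu_mem), ?_⟩
    simp [f, hu_apply, hw_apply, hA.2, hA.apply_swap i j, hij]
  refine ⟨u, w, ?_⟩
  have h := Submodule.finrank_add_finrank_le_of_map_eq_top f hBA hBf hAf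
  rwa [finrank_prod, finrank_self] at h

theorem IsAlternating.exists_eq_sum_of_rank_le {A : Matrix m m K} (hA : A.IsAlternating)
    {k : ℕ} (hk : A.rank ≤ 2 * k) :
    ∃ u w : Fin k → m → K, A = ∑ s, (vecMulVec (u s) (w s) - vecMulVec (w s) (u s)) := by
  induction k generalizing A with
  | zero =>
    refine ⟨0, 0, ?_⟩
    by_contra hA0
    obtain ⟨u, w, h⟩ := hA.exists_rank_sub_add_two_le (by simpa using hA0)
    omega
  | succ k ih =>
    rcases eq_or_ne A 0 with rfl | hA0
    · exact ⟨0, 0, by simp⟩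
    obtain ⟨u, w, h⟩ := hA.exists_rank_sub_add_two_le hA0
    obtain ⟨u', w', hB⟩ := ih (hA.sub (isAlternating_vecMulVec_sub_vecMulVec u w)) (by omega)
    refine ⟨Fin.cons u u', Fin.cons w w', ?_⟩
    rw [Fin.sum_univ_succ, Fin.cons_zero, Fin.cons_zero]
    simp only [Fin.cons_succ, ← hB]
    abel

end Alternating

end Matrix

/-- An alternating `n×n` matrix over a field has rank at most `2k` if and only if
it is a sum of `k` elementary alternating matrices `u·wᵀ − w·uᵀ`, i.e. iff, viewed
as a 2-vector, it lies in the `k`-chordal locus of the Grassmannian `Gr(2,n)`. -/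
theorem alternating_rank_le_iff_sum_decomposable {K : Type*} [Field K] {n : ℕ} (k : ℕ)
    (A : Matrix (Fin n) (Fin n) K) (hskew : Aᵀ = -A) (hdiag : ∀ i, A i i = 0) :
    A.rank ≤ 2 * k ↔
      ∃ u w : Fin k → (Fin n → K),
        A = ∑ s : Fin k, (Matrix.vecMulVec (u s) (w s) - Matrix.vecMulVec (w s) (u s)) := by
  refine ⟨Matrix.IsAlternating.exists_eq_sum_of_rank_le ⟨hskew, hdiag⟩, ?_⟩
  rintro ⟨u, w, rfl⟩
  simpa using rank_sum_vecMulVec_sub_vecMulVec_le u w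
end

section
/- Let ξ = e^{2πi/9} ∈ ℂ. For every nonzero v = (x1,x2,x3,x4) ∈ ℂ^4, one has rank(T(v)) ≤ 2 if and only if either (g1(v) = 0 and g2(v) = 0), or v is a nonzero scalar multiple of one of the four vectors (0,0,1,0), (−1,1,0,−1), (−1,ξ^3,0,−ξ^6), (−1,ξ^6,0,−ξ^3). Moreover this union is disjoint: none of these four vectors satisfies g1 = g2 = 0. (In the paper: the rank-2 locus D1 ⊂ P^3 of T is the disjoint union of the curve C = {g1 = g2 = 0}, isomorphic to the modular curve X(9), and four points.) -/
/-- The 5×5 alternating matrix `T` of quadrics in `x1,…,x4` (from the `(1,9)` case),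
evaluated at a point `v ∈ ℂ⁴` (here `v 0 = x1, …, v 3 = x4`). -/
def matrixT (v : Fin 4 → ℂ) : Matrix (Fin 5) (Fin 5) ℂ :=
  !![0, v 0 ^ 2, v 1 ^ 2, v 2 ^ 2, v 3 ^ 2;
     -(v 0 ^ 2), 0, v 0 * v 2, v 1 * v 3, -(v 2 * v 3);
     -(v 1 ^ 2), -(v 0 * v 2), 0, -(v 0 * v 3), -(v 1 * v 2);
     -(v 2 ^ 2), -(v 1 * v 3), v 0 * v 3, 0, -(v 0 * v 1);
     -(v 3 ^ 2), v 2 * v 3, v 1 * v 2, v 0 * v 1, 0]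

/-- `g1 = x1²x2 − x2²x4 − x1x4²`. -/
def polyG1 (v : Fin 4 → ℂ) : ℂ := v 0 ^ 2 * v 1 - v 1 ^ 2 * v 3 - v 0 * v 3 ^ 2

/-- `g2 = x1x2² − x3³ + x1²x4 − x2x4²`. -/
def polyG2 (v : Fin 4 → ℂ) : ℂ := v 0 * v 1 ^ 2 - v 2 ^ 3 + v 0 ^ 2 * v 3 - v 1 * v 3 ^ 2

/-!
A 5×5 alternating matrix `A` with a nonzero row `0` has rank at most 2 exactly when the four
4×4 Pfaffians through the index `0` vanish: a principal 4×4 minor is the square of its Pfaffian,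
and conversely, if `A 0 q ≠ 0`, the vanishing Pfaffians write `A` as a multiple of
`A 0 ∧ A q`. For `T(v)` these Pfaffians are `v₁g₁ − v₀g₂`, `−v₂g₁`, `−(v₀g₁ + v₃g₂)` and
`v₃g₁ − v₁g₂`, a 4×2 matrix in `v` applied to `(g₁, g₂)`. So either `g₁ = g₂ = 0`, or that
matrix has a kernel: if `g₁ = 0` this forces `v ∈ ℂ e₂`, otherwise `v₂ = 0`, `v₀² = −v₁v₃` and
`v₁² = v₀v₃`, i.e. `v ∈ ℂ (−1, ζ, 0, −ζ²)` with `ζ³ = 1`, and `ζ ∈ {1, ξ³, ξ⁶}`.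
The union is disjoint since `g₂(e₂) = −1` and `g₁(−1, ζ, 0, −ζ²) = 3ζ`.
-/

namespace Matrix

variable {n R K : Type*} [CommRing R] [Field K]

structure IsAlternating_s10 (A : Matrix n n R) : Prop where
  diag_eq_zero : ∀ i, A i i = 0
  apply_swap : ∀ i j, A j i = -A i j

/-- The Pfaffian of the principal submatrix of `A` on the rows and columns `i, j, k, l`. -/
def pfaffian4 (A : Matrix n n R) (i j k l : n) : R :=
  A i j * A k l - A i k * A j l + A i l * A j k

theorem IsAlternating_s10.det_submatrix_eq_pfaffian4_sq {A : Matrix n n R} (hA : A.IsAlternating_s10)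
    (i j k l : n) :
    (A.submatrix ![i, j, k, l] ![i, j, k, l]).det = A.pfaffian4 i j k l ^ 2 := by
  simp [det_succ_row_zero, Fin.sum_univ_succ, Fin.succAbove, -submatrix_cons_row, pfaffian4,
    hA.diag_eq_zero, hA.apply_swap i j, hA.apply_swap i k, hA.apply_swap i l,
    hA.apply_swap j k, hA.apply_swap j l, hA.apply_swap k l]
  ring

theorem IsAlternating_s10.pfaffian4_eq_zero_of_rank_le_two [Fintype n] {A : Matrix n n K}
    (hA : A.IsAlternating_s10) (hrank : A.rank ≤ 2) (i j k l : n) : A.pfaffian4 i j k l = 0 := by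
  by_contra hpf
  have hdet : (A.submatrix ![i, j, k, l] ![i, j, k, l]).det ≠ 0 := by
    rw [hA.det_submatrix_eq_pfaffian4_sq]
    exact pow_ne_zero 2 hpf
  have hsub := rank_submatrix_le A ![i, j, k, l] ![i, j, k, l]
  rw [rank_of_det_ne_zero hdet, Fintype.card_fin] at hsub
  omega

theorem rank_le_two_of_pfaffian4_eq_zero [Fintype n] (A : Matrix n n K) {p q : n}
    (hpq : A p q ≠ 0) (h : ∀ i j, A.pfaffian4 p q i j = 0) : A.rank ≤ 2 := by
  let M : Matrix n (Fin 2) K := of fun i => ![A p i, A q i]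
  let N : Matrix (Fin 2) n K := of ![fun j => (A p q)⁻¹ * A q j, fun j => -(A p q)⁻¹ * A p j]
  have hA : A = M * N := by
    ext i j
    have hpf := h i j
    rw [pfaffian4] at hpf
    simp [M, N, mul_apply, Fin.sum_univ_two]
    field_simp
    linear_combination hpf
  calc A.rank = (M * N).rank := by rw [← hA]
    _ ≤ M.rank := rank_mul_le_left M N
    _ ≤ 2 := (rank_le_card_width M).trans (by simp)

/-- Up to sign, each `A.pfaffian4 0 q i j` is zero or one of the four given Pfaffians. -/
theorem IsAlternating_s10.pfaffian4_zero_eq_zero {A : Matrix (Fin 5) (Fin 5) R}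
    (hA : A.IsAlternating_s10) (h₁ : A.pfaffian4 0 1 2 3 = 0) (h₂ : A.pfaffian4 0 1 2 4 = 0)
    (h₃ : A.pfaffian4 0 1 3 4 = 0) (h₄ : A.pfaffian4 0 2 3 4 = 0) (q i j : Fin 5) :
    A.pfaffian4 0 q i j = 0 := by
  unfold pfaffian4 at *
  fin_cases q <;> fin_cases i <;> fin_cases j <;>
    simp only [Fin.zero_eta, Fin.mk_one, Fin.reduceFinMk, hA.diag_eq_zero,
      hA.apply_swap 0 1, hA.apply_swap 0 2, hA.apply_swap 0 3, hA.apply_swap 0 4,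
      hA.apply_swap 1 2, hA.apply_swap 1 3, hA.apply_swap 1 4, hA.apply_swap 2 3,
      hA.apply_swap 2 4, hA.apply_swap 3 4] <;>
    first
    | ring1
    | linear_combination h₁ | linear_combination -h₁
    | linear_combination h₂ | linear_combination -h₂
    | linear_combination h₃ | linear_combination -h₃
    | linear_combination h₄ | linear_combination -h₄

theorem IsAlternating_s10.rank_le_two_iff {A : Matrix (Fin 5) (Fin 5) K} (hA : A.IsAlternating_s10)
    (h0 : A 0 ≠ 0) :
    A.rank ≤ 2 ↔ A.pfaffian4 0 1 2 3 = 0 ∧ A.pfaffian4 0 1 2 4 = 0 ∧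
      A.pfaffian4 0 1 3 4 = 0 ∧ A.pfaffian4 0 2 3 4 = 0 := by
  constructor
  · intro h
    refine ⟨?_, ?_, ?_, ?_⟩ <;> exact hA.pfaffian4_eq_zero_of_rank_le_two h _ _ _ _
  · rintro ⟨h₁, h₂, h₃, h₄⟩
    obtain ⟨q, hq⟩ := Function.ne_iff.mp h0
    exact rank_le_two_of_pfaffian4_eq_zero A hq (hA.pfaffian4_zero_eq_zero h₁ h₂ h₃ h₄ q)

end Matrix

theorem IsPrimitiveRoot.pow_three_eq_one_iff {K : Type*} [CommRing K] [IsDomain K] {ω ζ : K}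
    (hω : IsPrimitiveRoot ω 3) : ζ ^ 3 = 1 ↔ ζ = 1 ∨ ζ = ω ∨ ζ = ω ^ 2 := by
  constructor
  · intro hζ
    obtain ⟨i, hi, rfl⟩ := hω.eq_pow_of_pow_eq_one hζ
    interval_cases i <;> simp
  · rintro (rfl | rfl | rfl)
    · exact one_pow 3
    · exact hω.pow_eq_one
    · rw [← pow_mul, mul_comm, pow_mul, hω.pow_eq_one, one_pow]

theorem matrixT_isAlternating (v : Fin 4 → ℂ) : (matrixT v).IsAlternating_s10 := by
  refine ⟨fun i => ?_, fun i j => ?_⟩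
  · fin_cases i <;> simp [matrixT]
  · fin_cases i <;> fin_cases j <;> simp [matrixT]

theorem matrixT_zero_ne_zero {v : Fin 4 → ℂ} (hv : v ≠ 0) : matrixT v 0 ≠ 0 := by
  intro h
  apply hv
  funext k
  have hk := congrFun h k.succ
  fin_cases k <;> simpa [matrixT] using hk

theorem polyG1_smul (c : ℂ) (v : Fin 4 → ℂ) : polyG1 (c • v) = c ^ 3 * polyG1 v := by
  simp only [polyG1, Pi.smul_apply, smul_eq_mul]
  ring

theorem polyG2_smul (c : ℂ) (v : Fin 4 → ℂ) : polyG2 (c • v) = c ^ 3 * polyG2 v := by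
  simp only [polyG2, Pi.smul_apply, smul_eq_mul]
  ring

theorem polyG1_single : polyG1 ![0, 0, 1, 0] = 0 := by
  simp [polyG1]

theorem polyG2_single : polyG2 ![0, 0, 1, 0] = -1 := by
  simp [polyG2]

def cubeRootPoint (ζ : ℂ) : Fin 4 → ℂ := ![-1, ζ, 0, -ζ ^ 2]

theorem polyG1_cubeRootPoint {ζ : ℂ} (hζ : ζ ^ 3 = 1) : polyG1 (cubeRootPoint ζ) = 3 * ζ := by
  simp [polyG1, cubeRootPoint]
  linear_combination 2 * ζ * hζ

theorem polyG2_cubeRootPoint {ζ : ℂ} (hζ : ζ ^ 3 = 1) :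
    polyG2 (cubeRootPoint ζ) = -3 * ζ ^ 2 := by
  simp [polyG2, cubeRootPoint]
  linear_combination -ζ ^ 2 * hζ

theorem polyG1_cubeRootPoint_ne_zero {ζ : ℂ} (hζ : ζ ^ 3 = 1) :
    polyG1 (cubeRootPoint ζ) ≠ 0 := by
  rw [polyG1_cubeRootPoint hζ]
  exact mul_ne_zero three_ne_zero (ne_zero_pow three_ne_zero (hζ ▸ one_ne_zero))

theorem pfaffian4_matrixT (v : Fin 4 → ℂ) :
    (matrixT v).pfaffian4 0 1 2 3 = v 1 * polyG1 v - v 0 * polyG2 v ∧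
    (matrixT v).pfaffian4 0 1 2 4 = -(v 2 * polyG1 v) ∧
    (matrixT v).pfaffian4 0 1 3 4 = -(v 0 * polyG1 v + v 3 * polyG2 v) ∧
    (matrixT v).pfaffian4 0 2 3 4 = v 3 * polyG1 v - v 1 * polyG2 v := by
  refine ⟨?_, ?_, ?_, ?_⟩ <;> simp [Matrix.pfaffian4, matrixT, polyG1, polyG2] <;> ring

theorem eq_smul_single_of_polyG1_eq_zero {v : Fin 4 → ℂ} (hg₁ : polyG1 v = 0)
    (hg₂ : polyG2 v ≠ 0) (h₁ : v 1 * polyG1 v = v 0 * polyG2 v)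
    (h₃ : v 0 * polyG1 v = -(v 3 * polyG2 v)) (h₄ : v 3 * polyG1 v = v 1 * polyG2 v) :
    v = v 2 • ![0, 0, 1, 0] := by
  rw [hg₁, mul_zero, eq_comm] at h₁ h₃ h₄
  have hv₀ := (mul_eq_zero.mp h₁).resolve_right hg₂
  have hv₁ := (mul_eq_zero.mp h₄).resolve_right hg₂
  have hv₃ := (mul_eq_zero.mp (neg_eq_zero.mp h₃)).resolve_right hg₂
  funext i
  fin_cases i <;> simp [hv₀, hv₁, hv₃]

theorem exists_eq_smul_cubeRootPoint_of_polyG1_ne_zero {v : Fin 4 → ℂ} (hg₁ : polyG1 v ≠ 0)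
    (h₁ : v 1 * polyG1 v = v 0 * polyG2 v) (h₂ : v 2 * polyG1 v = 0)
    (h₃ : v 0 * polyG1 v = -(v 3 * polyG2 v)) (h₄ : v 3 * polyG1 v = v 1 * polyG2 v) :
    v 0 ≠ 0 ∧ ∃ ζ : ℂ, ζ ^ 3 = 1 ∧ v = (-v 0) • cubeRootPoint ζ := by
  have hv₂ : v 2 = 0 := (mul_eq_zero.mp h₂).resolve_right hg₁
  have hg₂ : polyG2 v ≠ 0 := by
    intro hg₂
    rw [hg₂, mul_zero] at h₁ h₄
    have hv₁ := (mul_eq_zero.mp h₁).resolve_right hg₁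
    have hv₃ := (mul_eq_zero.mp h₄).resolve_right hg₁
    exact hg₁ (by simp [polyG1, hv₁, hv₃])
  have hsq₀ : v 0 ^ 2 = -(v 1 * v 3) :=
    mul_right_cancel₀ hg₂ (by linear_combination v 1 * h₃ - v 0 * h₁)
  have hsq₁ : v 1 ^ 2 = v 0 * v 3 :=
    mul_right_cancel₀ hg₁ (by linear_combination v 1 * h₁ - v 0 * h₄)
  have hv₀ : v 0 ≠ 0 := by
    intro hv₀
    have hv₁ : v 1 = 0 := pow_eq_zero_iff two_ne_zero |>.mp (by rw [hsq₁, hv₀, zero_mul])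
    exact hg₁ (by simp [polyG1, hv₀, hv₁])
  refine ⟨hv₀, -v 1 / v 0, ?_, ?_⟩
  · field_simp
    linear_combination -v 1 * hsq₁ - v 0 * hsq₀
  · funext i
    fin_cases i <;> simp [cubeRootPoint, hv₂] <;> field_simp
    linear_combination -hsq₁

theorem matrixT_pfaffian4_eq_zero_iff {v : Fin 4 → ℂ} (hv : v ≠ 0) :
    ((matrixT v).pfaffian4 0 1 2 3 = 0 ∧ (matrixT v).pfaffian4 0 1 2 4 = 0 ∧
      (matrixT v).pfaffian4 0 1 3 4 = 0 ∧ (matrixT v).pfaffian4 0 2 3 4 = 0) ↔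
    (polyG1 v = 0 ∧ polyG2 v = 0) ∨
      ∃ c : ℂ, c ≠ 0 ∧ (v = c • ![0, 0, 1, 0] ∨ ∃ ζ : ℂ, ζ ^ 3 = 1 ∧ v = c • cubeRootPoint ζ) := by
  obtain ⟨e₁, e₂, e₃, e₄⟩ := pfaffian4_matrixT v
  rw [e₁, e₂, e₃, e₄, sub_eq_zero, neg_eq_zero, neg_eq_zero, add_eq_zero_iff_eq_neg, sub_eq_zero]
  constructor
  · rintro ⟨h₁, h₂, h₃, h₄⟩
    by_cases hg₁ : polyG1 v = 0
    · by_cases hg₂ : polyG2 v = 0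
      · exact Or.inl ⟨hg₁, hg₂⟩
      have hv_eq := eq_smul_single_of_polyG1_eq_zero hg₁ hg₂ h₁ h₃ h₄
      refine Or.inr ⟨v 2, fun hv₂ => hv ?_, Or.inl hv_eq⟩
      rw [hv_eq, hv₂, zero_smul]
    · obtain ⟨hv₀, hζ⟩ := exists_eq_smul_cubeRootPoint_of_polyG1_ne_zero hg₁ h₁ h₂ h₃ h₄
      exact Or.inr ⟨-v 0, neg_ne_zero.mpr hv₀, Or.inr hζ⟩
  · rintro (⟨hg₁, hg₂⟩ | ⟨c, -, rfl | ⟨ζ, hζ, rfl⟩⟩)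
    · simp [hg₁, hg₂]
    · rw [polyG1_smul, polyG2_smul, polyG1_single]
      simp
    · simp only [polyG1_smul, polyG2_smul, polyG1_cubeRootPoint hζ, polyG2_cubeRootPoint hζ]
      simp [cubeRootPoint]
      exact ⟨by ring, by linear_combination -3 * c ^ 4 * ζ * hζ, by ring⟩

/-- The rank-2 locus `D₁` of `T` is the disjoint union of the curve
`C = {g1 = g2 = 0}` (isomorphic to the modular curve `X(9)`) and four points. -/
theorem matrixT_rank_le_two_iff :
    (∀ v : Fin 4 → ℂ, v ≠ 0 →
      ((matrixT v).rank ≤ 2 ↔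
        (polyG1 v = 0 ∧ polyG2 v = 0) ∨
        ∃ c : ℂ, c ≠ 0 ∧
          (v = c • ![0, 0, 1, 0] ∨
           v = c • ![-1, 1, 0, -1] ∨
           v = c • ![-1, Complex.exp (2 * Real.pi * Complex.I / 9) ^ 3, 0,
                     -(Complex.exp (2 * Real.pi * Complex.I / 9) ^ 6)] ∨
           v = c • ![-1, Complex.exp (2 * Real.pi * Complex.I / 9) ^ 6, 0,
                     -(Complex.exp (2 * Real.pi * Complex.I / 9) ^ 3)]))) ∧
    ¬(polyG1 ![0, 0, 1, 0] = 0 ∧ polyG2 ![0, 0, 1, 0] = 0) ∧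
    ¬(polyG1 ![-1, 1, 0, -1] = 0 ∧ polyG2 ![-1, 1, 0, -1] = 0) ∧
    ¬(polyG1 ![-1, Complex.exp (2 * Real.pi * Complex.I / 9) ^ 3, 0,
               -(Complex.exp (2 * Real.pi * Complex.I / 9) ^ 6)] = 0 ∧
      polyG2 ![-1, Complex.exp (2 * Real.pi * Complex.I / 9) ^ 3, 0,
               -(Complex.exp (2 * Real.pi * Complex.I / 9) ^ 6)] = 0) ∧
    ¬(polyG1 ![-1, Complex.exp (2 * Real.pi * Complex.I / 9) ^ 6, 0,
               -(Complex.exp (2 * Real.pi * Complex.I / 9) ^ 3)] = 0 ∧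
      polyG2 ![-1, Complex.exp (2 * Real.pi * Complex.I / 9) ^ 6, 0,
               -(Complex.exp (2 * Real.pi * Complex.I / 9) ^ 3)] = 0) := by
  have hξ : IsPrimitiveRoot (Complex.exp (2 * Real.pi * Complex.I / 9)) 9 := by
    simpa using Complex.isPrimitiveRoot_exp 9 (by norm_num)
  set ξ := Complex.exp (2 * Real.pi * Complex.I / 9)
  have hroots (ζ : ℂ) : ζ ^ 3 = 1 ↔ ζ = 1 ∨ ζ = ξ ^ 3 ∨ ζ = ξ ^ 6 := by
    rw [(hξ.pow_of_dvd three_ne_zero (by norm_num)).pow_three_eq_one_iff, ← pow_mul]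
  have e₁ : cubeRootPoint 1 = ![-1, 1, 0, -1] := by simp [cubeRootPoint]
  have e₂ : cubeRootPoint (ξ ^ 3) = ![-1, ξ ^ 3, 0, -(ξ ^ 6)] := by
    simp [cubeRootPoint, ← pow_mul]
  have e₃ : cubeRootPoint (ξ ^ 6) = ![-1, ξ ^ 6, 0, -(ξ ^ 3)] := by
    rw [cubeRootPoint, ← pow_mul, show 6 * 2 = 9 + 3 by rfl, pow_add, hξ.pow_eq_one, one_mul]
  rw [← e₁, ← e₂, ← e₃]
  refine ⟨fun v hv => ?_, by simp [polyG2_single], ?_, ?_, ?_⟩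
  · rw [(matrixT_isAlternating v).rank_le_two_iff (matrixT_zero_ne_zero hv),
      matrixT_pfaffian4_eq_zero_iff hv]
    simp only [hroots, or_and_right, exists_or, exists_eq_left]
  all_goals exact fun h => polyG1_cubeRootPoint_ne_zero ((hroots _).mpr (by simp)) h.1
end

section
/- Let P = (1,0,0,1,0,0,1,0,0) ∈ ℂ^9. For every v = (v0,v1,v2,v3,v4) ∈ ℂ^5, all nine entries of the row vector v·R4 vanish at the point P if and only if v0 + v3 = 0. (This is the observation that every Heisenberg subrepresentation of quadrics containing a (1,9)-polarized abelian surface vanishes at the fixed point P, so such a surface is not cut out by quadrics.) -/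
/-- The point `P = (1,0,0,1,0,0,1,0,0) ∈ ℂ⁹`, the `H₉`-fixed point. -/
def pointP : Fin 9 → ℂ := ![1, 0, 0, 1, 0, 0, 1, 0, 0]

/-- The inclusion of the row index set `{0,…,4}` of `R₄` into `ℤ/9`. -/
def rowIdx (i : Fin 5) : Fin 9 := ⟨i.1, by omega⟩

/-- All nine entries of the row vector `v·R₄` (where `(R₄)_{ij} = x_{j+i}·x_{j−i}`,
indices mod 9) vanish at the point `P = (1,0,0,1,0,0,1,0,0)` if and only if
`v₀ + v₃ = 0`. -/
theorem vecMul_R4_vanishes_at_P_iff (v : Fin 5 → ℂ) :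
    (∀ j : Fin 9,
      (∑ i : Fin 5, v i * (pointP (j + rowIdx i) * pointP (j - rowIdx i))) = 0) ↔
    v 0 + v 3 = 0 := by
  have r0 : rowIdx 0 = 0 := rfl
  have r1 : rowIdx 1 = 1 := rfl
  have r2 : rowIdx 2 = 2 := rfl
  have r3 : rowIdx 3 = 3 := rfl
  have r4 : rowIdx 4 = 4 := rfl
  have p0 : pointP 0 = 1 := rfl
  have p1 : pointP 1 = 0 := rfl
  have p2 : pointP 2 = 0 := rfl
  have p3 : pointP 3 = 1 := rfl
  have p4 : pointP 4 = 0 := rfl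
  have p5 : pointP 5 = 0 := rfl
  have p6 : pointP 6 = 1 := rfl
  have p7 : pointP 7 = 0 := rfl
  have p8 : pointP 8 = 0 := rfl
  have pn1 : pointP (-1) = 0 := rfl
  have pn2 : pointP (-2) = 0 := rfl
  have pn3 : pointP (-3) = 1 := rfl
  have pn4 : pointP (-4) = 0 := rfl
  constructor
  · intro h
    have := h 0
    simp [Fin.sum_univ_five, r0, r1, r2, r3, r4, p0, p1, p2, p3, p4, p5, p6, p7, p8,
      pn1, pn2, pn3, pn4] at this
    linear_combination this
  · intro h j
    fin_cases j <;>
      simp [Fin.sum_univ_five, r0, r1, r2, r3, r4, p0, p1, p2, p3, p4, p5, p6, p7, p8,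
        pn1, pn2, pn3, pn4] <;>
      linear_combination h
end

section
/- Let J1 ⊂ ℂ[x0,...,x8] be the ideal generated by the monomials x_i x_{i+2} (i ∈ ℤ/9), x_i x_{i+3} x_{i+6} (i ∈ ℤ/9), and x_{i+3} x_{i+7} x_{i+8} (i ∈ ℤ/9), indices mod 9. Then for every integer n ≥ 1, the dimension over ℂ of the degree-n homogeneous component of the graded quotient ring ℂ[x0,...,x8]/J1 equals 9n^2. (J1 is the Stanley–Reisner face ideal of a triangulation Δ_9 of the torus with 9 vertices, 27 edges and 18 triangles, and 9n^2 is the Hilbert polynomial of a (1,9)-polarized abelian surface in P^8.) -/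
open MvPolynomial

/-- The Stanley–Reisner ideal `J₁ ⊂ ℂ[x0,…,x8]` of the triangulation `Δ₉` of the torus,
generated by `x_i x_{i+2}`, `x_i x_{i+3} x_{i+6}` and `x_{i+3} x_{i+7} x_{i+8}`
(indices mod 9). -/
noncomputable def idealJ1 : Ideal (MvPolynomial (Fin 9) ℂ) :=
  Ideal.span
    ((Set.range fun i : Fin 9 => X i * X (i + 2)) ∪
     (Set.range fun i : Fin 9 => X i * X (i + 3) * X (i + 6)) ∪
     (Set.range fun i : Fin 9 => X (i + 3) * X (i + 7) * X (i + 8)))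

/-!
For a monomial ideal `I`, the monomials outside `I` form a basis of `K[x]/I`, so the Hilbert
function counts the standard monomials of degree `n`. When `I` is the Stanley–Reisner ideal of a
simplicial complex, a monomial is standard iff its support is a face, and a face with `k + 1`
vertices supports `(n - 1).choose k` monomials of degree `n`. Hence the Hilbert function is
`∑ₖ fₖ (n - 1).choose k`, where `(f₀, f₁, f₂) = (9, 27, 18)` is the face vector of `Δ₉`, and
`9 + 27 (n - 1) + 18 (n - 1).choose 2 = 9 n²`.
-/

open Module Finset

namespace Finsupp

variable {σ : Type*}

noncomputable def squarefreeExponent (F : Finset σ) : σ →₀ ℕ := ∑ i ∈ F, single i 1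

@[simp]
theorem squarefreeExponent_apply [DecidableEq σ] (F : Finset σ) (i : σ) :
    squarefreeExponent F i = if i ∈ F then 1 else 0 := by
  simp [squarefreeExponent, Finset.sum_apply', single_apply]

theorem squarefreeExponent_le_iff {F : Finset σ} {m : σ →₀ ℕ} :
    squarefreeExponent F ≤ m ↔ F ⊆ m.support := by
  classical
  simp only [le_def, squarefreeExponent_apply, Finset.subset_iff, mem_support_iff]
  refine ⟨fun h i hi => ?_, fun h i => ?_⟩
  · simpa [hi, Nat.one_le_iff_ne_zero] using h i
  · split_ifs with hi
    · exact Nat.one_le_iff_ne_zero.mpr (h hi)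
    · exact Nat.zero_le _

theorem map_addRight_squarefreeExponent_finsuppAntidiag [DecidableEq σ] (F : Finset σ) (k : ℕ) :
    (F.finsuppAntidiag k).map (addRightEmbedding (squarefreeExponent F)) =
      {m ∈ F.finsuppAntidiag (k + #F) | m.support = F} := by
  ext m
  simp only [mem_map, mem_finsuppAntidiag, mem_filter, addRightEmbedding_apply]
  constructor
  · rintro ⟨b, ⟨rfl, hbF⟩, rfl⟩
    have hsupp : (b + squarefreeExponent F).support = F := by
      ext i
      by_cases hi : i ∈ F
      · simp [hi]
      · simp [hi, notMem_support_iff.mp (mt (@hbF i) hi)]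
    exact ⟨⟨by simp [sum_add_distrib], hsupp.le⟩, hsupp⟩
  · rintro ⟨⟨hm, -⟩, hsupp⟩
    obtain ⟨b, rfl⟩ := exists_add_of_le (squarefreeExponent_le_iff.mpr hsupp.ge)
    refine ⟨b, ⟨?_, ?_⟩, add_comm _ _⟩
    · simp only [coe_add, Pi.add_apply, sum_add_distrib, squarefreeExponent_apply,
        sum_ite_mem, inter_self, sum_const, smul_eq_mul, mul_one] at hm
      change ∑ i ∈ F, b i = k
      omega
    · exact (support_mono (le_add_self : b ≤ squarefreeExponent F + b)).trans hsupp.le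

theorem card_finsuppAntidiag_filter_support_eq [DecidableEq σ] {F : Finset σ} (hF : F.Nonempty) {n : ℕ}
    (hn : 1 ≤ n) :
    #{m ∈ F.finsuppAntidiag n | m.support = F} = (n - 1).choose (#F - 1) := by
  have hF : 1 ≤ #F := hF.card_pos
  rcases le_or_gt #F n with hFn | hFn
  · obtain ⟨k, rfl⟩ := Nat.exists_eq_add_of_le' hFn
    rw [← map_addRight_squarefreeExponent_finsuppAntidiag, card_map,
      card_finsuppAntidiag_nat_eq_choose, show k + #F - 1 = #F + k - 1 by omega]
    exact Nat.choose_symm_of_eq_add (by omega)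
  · have hlt : n - 1 < #F - 1 := by omega
    rw [Nat.choose_eq_zero_of_lt hlt, card_eq_zero, filter_eq_empty_iff]
    intro m hm hsupp
    have hpos : ∑ i ∈ F, 1 ≤ ∑ i ∈ F, m i :=
      Finset.sum_le_sum fun i hi => Nat.one_le_iff_ne_zero.mpr (mem_support_iff.mp (hsupp.ge hi))
    rw [(mem_finsuppAntidiag.mp hm).1, sum_const, smul_eq_mul, mul_one] at hpos
    omega

theorem ncard_setOf_degree_eq_support_mem {𝓕 : Finset (Finset σ)} (h𝓕 : ∀ F ∈ 𝓕, F.Nonempty)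
    {n : ℕ} (hn : 1 ≤ n) :
    {m : σ →₀ ℕ | m.degree = n ∧ m.support ∈ 𝓕}.ncard = ∑ F ∈ 𝓕, (n - 1).choose (#F - 1) := by
  classical
  have hset : {m : σ →₀ ℕ | m.degree = n ∧ m.support ∈ 𝓕} =
      ↑(𝓕.biUnion fun F => {m ∈ F.finsuppAntidiag n | m.support = F}) := by
    ext m
    simp [mem_finsuppAntidiag, degree_apply]
  rw [hset, Set.ncard_coe_finset, card_biUnion]
  · exact Finset.sum_congr rfl fun F hF => card_finsuppAntidiag_filter_support_eq (h𝓕 F hF) hn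
  · intro F _ F' _ hne
    exact disjoint_left.mpr fun m hm hm' =>
      hne ((mem_filter.mp hm).2.symm.trans (mem_filter.mp hm').2)

end Finsupp

theorem Finset.sum_card_sub_one_eq_sum_range {σ : Type*} [Fintype σ]
    {𝓕 : Finset (Finset σ)} (h𝓕 : ∀ F ∈ 𝓕, F.Nonempty) (f : ℕ → ℕ) :
    ∑ F ∈ 𝓕, f (#F - 1) = ∑ k ∈ range (Fintype.card σ), #{F ∈ 𝓕 | #F = k + 1} * f k := by
  rw [← sum_fiberwise_of_maps_to (g := fun F => #F - 1) (t := range (Fintype.card σ))]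
  · refine Finset.sum_congr rfl fun k _ => ?_
    rw [Finset.sum_congr rfl fun F hF => by rw [(mem_filter.mp hF).2], sum_const, smul_eq_mul]
    congr 2
    ext F
    simp only [mem_filter]
    constructor
    · rintro ⟨hF, rfl⟩
      have := (h𝓕 F hF).card_pos
      exact ⟨hF, by omega⟩
    · rintro ⟨hF, hcard⟩
      exact ⟨hF, by omega⟩
  · intro F hF
    have := (h𝓕 F hF).card_pos
    have := card_le_univ F
    rw [mem_range]
    omega

namespace MvPolynomial

variable {σ K : Type*} [Field K]

theorem finrank_restrictSupport {s : Set (σ →₀ ℕ)} (hs : s.Finite) :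
    finrank K (restrictSupport K s) = s.ncard := by
  have := hs.to_subtype
  exact finrank_eq_nat_card_basis (basisRestrictSupport K s)

theorem finrank_restrictSupport_quotient {s : Set (σ →₀ ℕ)} (hs : s.Finite) (t : Set (σ →₀ ℕ)) :
    finrank K (restrictSupport K s ⧸ (restrictSupport K t).comap (restrictSupport K s).subtype) =
      (s \ t).ncard := by
  have hcomap : (restrictSupport K t).comap (restrictSupport K s).subtype =
      (restrictSupport K (s ∩ t)).comap (restrictSupport K s).subtype := by
    ext ⟨x, hx⟩
    simp only [Submodule.mem_comap, Submodule.subtype_apply, mem_restrictSupport_iff,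
      Set.subset_inter_iff]
    exact (and_iff_right hx).symm
  have := hs.to_subtype
  have := Module.Finite.of_basis (basisRestrictSupport K s)
  have hsum := Submodule.finrank_quotient_add_finrank
    ((restrictSupport K t).comap (restrictSupport K s).subtype)
  rw [hcomap, (Submodule.comapSubtypeEquivOfLe (restrictSupport_mono K
      Set.inter_subset_left)).finrank_eq, finrank_restrictSupport (hs.inter_of_left t),
    finrank_restrictSupport hs, ← Set.ncard_inter_add_ncard_sdiff_eq_ncard s t hs] at hsum
  rw [hcomap]
  omega

theorem restrictScalars_span_monomial (s : Set (σ →₀ ℕ)) :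
    (Ideal.span ((monomial · (1 : K)) '' s)).restrictScalars K =
      restrictSupport K {m | ∃ g ∈ s, g ≤ m} := by
  ext p
  rw [Submodule.restrictScalars_mem, mem_ideal_span_monomial_image, mem_restrictSupport_iff]
  rfl

theorem finrank_homogeneousSubmodule_quotient_span_monomial [Finite σ] (s : Set (σ →₀ ℕ))
    (n : ℕ) :
    finrank K (homogeneousSubmodule σ K n ⧸
      ((Ideal.span ((monomial · (1 : K)) '' s)).restrictScalars K).comap
        (homogeneousSubmodule σ K n).subtype) =
      {m : σ →₀ ℕ | m.degree = n ∧ ∀ g ∈ s, ¬g ≤ m}.ncard := by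
  have hV : homogeneousSubmodule σ K n = restrictSupport K {m | m.degree = n} :=
    homogeneousSubmodule_eq_finsupp_supported σ K n
  rw [hV, restrictScalars_span_monomial,
    finrank_restrictSupport_quotient (Finsupp.finite_of_degree_eq n)]
  congr 1
  ext m
  simp

variable (K) in
noncomputable def stanleyReisnerIdeal (N : Set (Finset σ)) : Ideal (MvPolynomial σ K) :=
  Ideal.span ((fun G => ∏ i ∈ G, X i) '' N)

open Finsupp

theorem stanleyReisnerIdeal_eq_span_monomial (N : Set (Finset σ)) :
    stanleyReisnerIdeal K N = Ideal.span ((monomial · (1 : K)) '' (squarefreeExponent '' N)) := by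
  simp_rw [stanleyReisnerIdeal, Set.image_image, squarefreeExponent, monomial_sum_one, X]

theorem finrank_homogeneousSubmodule_quotient_stanleyReisnerIdeal [Fintype σ]
    (N : Set (Finset σ)) {n : ℕ} (hn : 1 ≤ n) :
    finrank K (homogeneousSubmodule σ K n ⧸
      ((stanleyReisnerIdeal K N).restrictScalars K).comap (homogeneousSubmodule σ K n).subtype) =
      ∑ k ∈ range (Fintype.card σ),
        {F : Finset σ | #F = k + 1 ∧ ∀ G ∈ N, ¬G ⊆ F}.ncard * (n - 1).choose k := by
  classical
  set faces : Finset (Finset σ) := {F | F.Nonempty ∧ ∀ G ∈ N, ¬G ⊆ F}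
  have hfaces : ∀ F ∈ faces, F.Nonempty := fun F hF => (mem_filter.mp hF).2.1
  have hstandard : {m : σ →₀ ℕ | m.degree = n ∧ ∀ g ∈ squarefreeExponent '' N, ¬g ≤ m} =
      {m | m.degree = n ∧ m.support ∈ faces} := by
    ext m
    simp only [Set.mem_ofPred_eq, Set.forall_mem_image, squarefreeExponent_le_iff, faces,
      mem_filter, mem_univ, true_and, support_nonempty_iff]
    refine and_congr_right fun hm => (and_iff_right ?_).symm
    rintro rfl
    simp at hm
    omega
  have hcount : ∀ k, {F : Finset σ | #F = k + 1 ∧ ∀ G ∈ N, ¬G ⊆ F}.ncard =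
      #{F ∈ faces | #F = k + 1} := by
    intro k
    rw [← Set.ncard_coe_finset]
    congr 1
    ext F
    simp only [Set.mem_ofPred_eq, coe_filter, mem_filter, mem_univ, true_and, faces,
      ← card_pos]
    constructor
    · rintro ⟨hcard, hface⟩
      exact ⟨⟨by omega, hface⟩, hcard⟩
    · rintro ⟨⟨-, hface⟩, hcard⟩
      exact ⟨hcard, hface⟩
  rw [stanleyReisnerIdeal_eq_span_monomial, finrank_homogeneousSubmodule_quotient_span_monomial,
    hstandard, ncard_setOf_degree_eq_support_mem hfaces hn,
    sum_card_sub_one_eq_sum_range hfaces]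
  simp_rw [hcount]

end MvPolynomial

def torusNonfaces : Set (Finset (Fin 9)) :=
  (Set.range fun i => {i, i + 2}) ∪ (Set.range fun i => {i, i + 3, i + 6}) ∪
    (Set.range fun i => {i + 3, i + 7, i + 8})

theorem idealJ1_eq_stanleyReisnerIdeal : idealJ1 = stanleyReisnerIdeal ℂ torusNonfaces := by
  simp [idealJ1, stanleyReisnerIdeal, torusNonfaces, Set.image_union, ← Set.range_comp,
    Function.comp_def, mul_assoc]

set_option maxRecDepth 10000 in
theorem ncard_torusFaces (k : ℕ) (hk : k < 9) :
    {F : Finset (Fin 9) | #F = k + 1 ∧ ∀ G ∈ torusNonfaces, ¬G ⊆ F}.ncard =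
      [9, 27, 18].getD k 0 := by
  have hfaces : {F : Finset (Fin 9) | #F = k + 1 ∧ ∀ G ∈ torusNonfaces, ¬G ⊆ F} =
      ↑((powersetCard (k + 1) univ).filter fun F =>
        ∀ i : Fin 9, ¬{i, i + 2} ⊆ F ∧ ¬{i, i + 3, i + 6} ⊆ F ∧ ¬{i + 3, i + 7, i + 8} ⊆ F) := by
    ext F
    simp [torusNonfaces, or_imp, forall_and, and_assoc]
  rw [hfaces, Set.ncard_coe_finset]
  clear hfaces
  revert k
  decide

/-- For every `n ≥ 1`, the degree-`n` homogeneous component of `ℂ[x0,…,x8]/J₁`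
has dimension `9n²` over `ℂ` — the Hilbert function of a `(1,9)`-polarized
abelian surface in `P⁸`. -/
theorem hilbert_function_J1 (n : ℕ) (hn : 1 ≤ n) :
    Module.finrank ℂ
      ((homogeneousSubmodule (Fin 9) ℂ n) ⧸
        (Submodule.comap (homogeneousSubmodule (Fin 9) ℂ n).subtype
          (Submodule.restrictScalars ℂ idealJ1))) = 9 * n ^ 2 := by
  rw [idealJ1_eq_stanleyReisnerIdeal,
    finrank_homogeneousSubmodule_quotient_stanleyReisnerIdeal _ hn, Fintype.card_fin,
    Finset.sum_congr rfl fun k hk => by rw [ncard_torusFaces k (mem_range.mp hk)]]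
  obtain ⟨m, rfl⟩ := Nat.exists_eq_add_of_le' hn
  calc ∑ k ∈ range 9, [9, 27, 18].getD k 0 * (m + 1 - 1).choose k
      = 9 + 27 * m + 18 * m.choose 2 := by simp [sum_range_succ]
    _ = 9 * (m + 1) ^ 2 := by qify [Nat.cast_choose_two]; ring
end
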